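/- In any zero-error SPIR scheme, for every message index k ∈ {1,…,K} and every database index n ∈ {1,…,N}, L ≤ H(A_1^{[k]}, …, A_N^{[k]} | F) − H(A_n^{[k]} | F); that is, the joint conditional entropy of the answers given the user randomness exceeds the conditional entropy of any single answer by at least the message length in bits. -/

import Mathlib

open Finset

attribute [local instance] Classical.propDecidable

/-- Probability that the random variable `X` takes the value `a`, on a finite
sample space `Ω` with probability mass function `p`. -/
noncomputable def prob {Ω α : Type*} [Fintype Ω] (p : Ω → ℝ) (X : Ω → α) (a : α) : ℝ :=
  ∑ ω : Ω, if X ω = a then p ω else 0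

/-- Shannon entropy (in bits) of the random variable `X`. -/
noncomputable def ent {Ω α : Type*} [Fintype Ω] [Fintype α] (p : Ω → ℝ) (X : Ω → α) : ℝ :=
  - ∑ a : α, prob p X a * Real.logb 2 (prob p X a)

/-- Conditional Shannon entropy (in bits) `H(X | Y)`. -/
noncomputable def condEnt {Ω α β : Type*} [Fintype Ω] [Fintype α] [Fintype β]
    (p : Ω → ℝ) (X : Ω → α) (Y : Ω → β) : ℝ :=
  ent p (fun ω => (X ω, Y ω)) - ent p Y

/-- Shannon mutual information (in bits) `I(X ; Y)`. -/
noncomputable def mutInfo {Ω α β : Type*} [Fintype Ω] [Fintype α] [Fintype β]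
    (p : Ω → ℝ) (X : Ω → α) (Y : Ω → β) : ℝ :=
  ent p X + ent p Y - ent p (fun ω => (X ω, Y ω))

/-- `X` and `Y` are identically distributed. -/
def IdentDist {Ω α : Type*} [Fintype Ω] (p : Ω → ℝ) (X Y : Ω → α) : Prop :=
  ∀ a : α, prob p X a = prob p Y a

/-- `X` is uniformly distributed on `α`. -/
def Unif {Ω α : Type*} [Fintype Ω] [Fintype α] (p : Ω → ℝ) (X : Ω → α) : Prop :=
  ∀ a : α, prob p X a = 1 / (Fintype.card α : ℝ)

/-! Correctness makes `(W_k, A_n)` a function of the answers and `F`, so the left-hand side is at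
least `H(W_k | A_n, F)`. Since `F` is independent of `(W, S)` and `A_n` depends on `F` only through
`Q_n`, conditioning on `F` may be replaced by conditioning on `Q_n`, and
`H(W_k | A_n, Q_n) = L - I(W_k ; A_n, Q_n)`. User privacy moves this mutual information to the
retrieval of some `k' ≠ k`, where database privacy and data processing make it vanish. -/

open Real

section Probability

variable {Ω : Type*} [Fintype Ω] {p : Ω → ℝ}

lemma prob_nonneg (hp0 : ∀ ω, 0 ≤ p ω) {α : Type*} (X : Ω → α) (a : α) : 0 ≤ prob p X a :=
  sum_nonneg fun ω _ => by split_ifs <;> simp [hp0 ω]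

lemma sum_prob (hp1 : ∑ ω, p ω = 1) {α : Type*} [Fintype α] (X : Ω → α) :
    ∑ a, prob p X a = 1 := by
  simp only [prob]
  rw [sum_comm]
  simpa using hp1

lemma prob_comp {α β : Type*} [Fintype α] (f : α → β) (X : Ω → α) (b : β) :
    prob p (fun ω => f (X ω)) b = ∑ a, if f a = b then prob p X a else 0 := by
  simp only [prob, ← sum_filter]
  rw [sum_comm' (t' := univ.filter fun ω => f (X ω) = b) (s' := fun ω => {X ω})]
  · simp
  · aesop

lemma sum_prob_pair_right {α β : Type*} [Fintype β] (X : Ω → α) (Y : Ω → β) (a : α) :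
    ∑ b, prob p (fun ω => (X ω, Y ω)) (a, b) = prob p X a := by
  simp only [prob, Prod.mk.injEq, ite_and]
  rw [sum_comm]
  simp

lemma sum_prob_pair_left {α β : Type*} [Fintype α] (X : Ω → α) (Y : Ω → β) (b : β) :
    ∑ a, prob p (fun ω => (X ω, Y ω)) (a, b) = prob p Y b := by
  simp only [prob, Prod.mk.injEq, and_comm (a := X _ = _), ite_and]
  rw [sum_comm]
  simp

lemma prob_pair_le_left (hp0 : ∀ ω, 0 ≤ p ω) {α β : Type*} [Fintype β] (X : Ω → α)
    (Y : Ω → β) (a : α) (b : β) : prob p (fun ω => (X ω, Y ω)) (a, b) ≤ prob p X a := by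
  rw [← sum_prob_pair_right X Y a]
  exact single_le_sum (f := fun b => prob p _ (a, b)) (fun _ _ => prob_nonneg hp0 _ _)
    (mem_univ b)

lemma prob_pair_le_right (hp0 : ∀ ω, 0 ≤ p ω) {α β : Type*} [Fintype α] (X : Ω → α)
    (Y : Ω → β) (a : α) (b : β) : prob p (fun ω => (X ω, Y ω)) (a, b) ≤ prob p Y b := by
  rw [← sum_prob_pair_left X Y b]
  exact single_le_sum (f := fun a => prob p _ (a, b)) (fun _ _ => prob_nonneg hp0 _ _)
    (mem_univ a)

lemma sum_prob_comp_mul {γ δ : Type*} [Fintype γ] [Fintype δ] (F : Ω → γ) (h : γ → δ)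
    (c : δ → ℝ) : ∑ q, prob p (fun ω => h (F ω)) q * c q = ∑ f, prob p F f * c (h f) := by
  simp only [prob_comp, sum_mul, ite_mul, zero_mul]
  rw [sum_comm]
  simp

lemma IdentDist.comp {α β : Type*} [Fintype α] {X Y : Ω → α} (h : IdentDist p X Y)
    (f : α → β) : IdentDist p (fun ω => f (X ω)) (fun ω => f (Y ω)) := fun b => by
  simp only [prob_comp, h _]

end Probability

section Entropy

variable {Ω : Type*} [Fintype Ω] {p : Ω → ℝ}

lemma ent_eq_sum_negMulLog {α : Type*} [Fintype α] (X : Ω → α) :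
    ent p X = (∑ a, negMulLog (prob p X a)) / log 2 := by
  simp only [ent, logb, negMulLog, sum_div, ← sum_neg_distrib]
  exact sum_congr rfl fun a _ => by ring

lemma ent_congr {α : Type*} [Fintype α] {X Y : Ω → α} (h : IdentDist p X Y) :
    ent p X = ent p Y := by
  simp only [ent, h _]

lemma ent_comp_of_injective {α β : Type*} [Fintype α] [Fintype β] (X : Ω → α) {e : α → β}
    (he : Function.Injective e) : ent p (fun ω => e (X ω)) = ent p X := by
  simp only [ent, neg_inj]
  refine (Fintype.sum_of_injective e he _ _ (fun b hb => ?_) fun a => ?_).symm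
  · have : prob p (fun ω => e (X ω)) b = 0 := sum_eq_zero fun ω _ => if_neg fun h => hb ⟨_, h⟩
    simp [this]
  · simp only [prob, he.eq_iff]

lemma ent_le_ent_pair (hp0 : ∀ ω, 0 ≤ p ω) {α β : Type*} [Fintype α] [Fintype β]
    (X : Ω → α) (Y : Ω → β) : ent p Y ≤ ent p (fun ω => (X ω, Y ω)) := by
  simp only [ent, neg_le_neg_iff]
  rw [Fintype.sum_prod_type_right]
  refine sum_le_sum fun b _ => ?_
  calc _ ≤ ∑ a, prob p (fun ω => (X ω, Y ω)) (a, b) * logb 2 (prob p Y b) :=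
        sum_le_sum fun a _ => ?_
    _ = prob p Y b * logb 2 (prob p Y b) := by rw [← sum_mul, sum_prob_pair_left]
  rcases (prob_nonneg hp0 (fun ω => (X ω, Y ω)) (a, b)).eq_or_lt with h0 | hpos
  · simp [← h0]
  · exact mul_le_mul_of_nonneg_left
      (logb_le_logb_of_le one_lt_two hpos (prob_pair_le_right hp0 X Y a b)) hpos.le

lemma ent_comp_le (hp0 : ∀ ω, 0 ≤ p ω) {α β : Type*} [Fintype α] [Fintype β]
    (X : Ω → α) (g : α → β) : ent p (fun ω => g (X ω)) ≤ ent p X :=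
  calc ent p (fun ω => g (X ω)) ≤ ent p (fun ω => (X ω, g (X ω))) := ent_le_ent_pair hp0 _ _
    _ = ent p X := ent_comp_of_injective X (e := fun x => (x, g x)) fun _ _ h => congrArg Prod.fst h

lemma ent_of_unif {α : Type*} [Fintype α] [Nonempty α] {X : Ω → α} (h : Unif p X) :
    ent p X = logb 2 (Fintype.card α) := by
  have hc : (0 : ℝ) < Fintype.card α := by exact_mod_cast Fintype.card_pos
  simp only [ent, h _, sum_const, card_univ, nsmul_eq_mul, one_div, logb_inv]
  field_simp

lemma ent_pair_eq_add_sum (hp1 : ∑ ω, p ω = 1) {α γ : Type*} [Fintype α] [Fintype γ]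
    (X : Ω → α) (Z : Ω → γ) (Y : γ → Ω → α)
    (h : ∀ a z, prob p (fun ω => (X ω, Z ω)) (a, z) = prob p Z z * prob p (Y z) a) :
    ent p (fun ω => (X ω, Z ω)) = ent p Z + ∑ z, prob p Z z * ent p (Y z) := by
  simp only [ent_eq_sum_negMulLog, Fintype.sum_prod_type_right, h, negMulLog_mul,
    sum_add_distrib, ← sum_mul, ← mul_sum, sum_prob hp1, one_mul, mul_div_assoc, add_div,
    sum_div]

lemma condEnt_comp_le (hp0 : ∀ ω, 0 ≤ p ω) {α β γ : Type*} [Fintype α] [Fintype β]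
    [Fintype γ] (X : Ω → α) (Y : Ω → β) (g : α → β → γ) :
    condEnt p (fun ω => g (X ω) (Y ω)) Y ≤ condEnt p X Y := by
  have := ent_comp_le hp0 (fun ω => (X ω, Y ω)) fun x => (g x.1 x.2, x.2)
  unfold condEnt
  linarith

lemma condEnt_pair_sub_condEnt {α β γ : Type*} [Fintype α] [Fintype β] [Fintype γ]
    (X : Ω → α) (Y : Ω → β) (Z : Ω → γ) :
    condEnt p (fun ω => (X ω, Y ω)) Z - condEnt p Y Z
      = ent p X - mutInfo p X (fun ω => (Y ω, Z ω)) := by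
  have := ent_comp_of_injective (p := p) (fun ω => (X ω, Y ω, Z ω))
    (e := fun x => ((x.1, x.2.1), x.2.2)) (Equiv.prodAssoc α β γ).symm.injective
  simp only [condEnt, mutInfo]
  rw [← this]
  ring

end Entropy

lemma sum_mul_log_div_sum_le {ι : Type*} (s : Finset ι) {a b : ι → ℝ}
    (ha : ∀ i ∈ s, 0 ≤ a i) (hb : ∀ i ∈ s, 0 ≤ b i) (hab : ∀ i ∈ s, b i = 0 → a i = 0) :
    (∑ i ∈ s, a i) * log ((∑ i ∈ s, a i) / ∑ i ∈ s, b i) ≤ ∑ i ∈ s, a i * log (a i / b i) := by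
  set B := ∑ i ∈ s, b i
  rcases (sum_nonneg hb).eq_or_lt with hB | hB
  · have ha0 : ∀ i ∈ s, a i = 0 := fun i hi =>
      hab i hi ((sum_eq_zero_iff_of_nonneg hb).1 hB.symm i hi)
    rw [sum_eq_zero ha0, zero_mul]
    exact (sum_eq_zero fun i hi => by simp [ha0 i hi]).ge
  · have hw : ∀ i ∈ s, b i / B * (a i / b i) = a i / B := fun i hi => by
      rcases (hb i hi).eq_or_lt with h | h
      · simp [← h, hab i hi h.symm]
      · field_simp
    -- Jensen for `x ↦ x log x`, with weights `b i / B` at the points `a i / b i`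
    have hJensen := convexOn_mul_log.map_sum_le (t := s) (w := fun i => b i / B)
      (p := fun i => a i / b i) (fun i hi => div_nonneg (hb i hi) hB.le)
      (by rw [← sum_div, div_self hB.ne']) fun i hi => div_nonneg (ha i hi) (hb i hi)
    simp only [smul_eq_mul] at hJensen
    have hR : ∑ i ∈ s, b i / B * (a i / b i * log (a i / b i))
        = (∑ i ∈ s, a i * log (a i / b i)) / B := by
      rw [sum_div]
      exact sum_congr rfl fun i hi => by rw [← mul_assoc, hw i hi, div_mul_eq_mul_div]
    rwa [sum_congr rfl hw, ← sum_div, hR, div_mul_eq_mul_div,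
      div_le_div_iff_of_pos_right hB] at hJensen

section MutualInformation

variable {Ω : Type*} [Fintype Ω] {p : Ω → ℝ}

lemma mutInfo_eq_sum_mul_log (hp0 : ∀ ω, 0 ≤ p ω) {α β : Type*} [Fintype α] [Fintype β]
    (X : Ω → α) (Y : Ω → β) :
    mutInfo p X Y = (∑ x : α × β, prob p (fun ω => (X ω, Y ω)) x *
      log (prob p (fun ω => (X ω, Y ω)) x / (prob p X x.1 * prob p Y x.2))) / log 2 := by
  have hterm : ∀ x : α × β, prob p (fun ω => (X ω, Y ω)) x *
      log (prob p (fun ω => (X ω, Y ω)) x / (prob p X x.1 * prob p Y x.2))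
        = -negMulLog (prob p (fun ω => (X ω, Y ω)) x)
          - prob p (fun ω => (X ω, Y ω)) x * log (prob p X x.1)
          - prob p (fun ω => (X ω, Y ω)) x * log (prob p Y x.2) := by
    rintro ⟨a, b⟩
    rcases (prob_nonneg hp0 (fun ω => (X ω, Y ω)) (a, b)).eq_or_lt with h0 | hpos
    · simp [← h0]
    · have hX := hpos.trans_le (prob_pair_le_left hp0 X Y a b)
      have hY := hpos.trans_le (prob_pair_le_right hp0 X Y a b)
      rw [negMulLog, log_div hpos.ne' (by positivity), log_mul hX.ne' hY.ne']
      ring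
  have hX : ∑ x : α × β, prob p (fun ω => (X ω, Y ω)) x * log (prob p X x.1)
      = -∑ a, negMulLog (prob p X a) := by
    simp only [Fintype.sum_prod_type, ← sum_mul, sum_prob_pair_right, negMulLog,
      ← sum_neg_distrib, neg_mul, neg_neg]
  have hY : ∑ x : α × β, prob p (fun ω => (X ω, Y ω)) x * log (prob p Y x.2)
      = -∑ b, negMulLog (prob p Y b) := by
    simp only [Fintype.sum_prod_type_right, ← sum_mul, sum_prob_pair_left, negMulLog,
      ← sum_neg_distrib, neg_mul, neg_neg]
  simp only [hterm, sum_sub_distrib, sum_neg_distrib, hX, hY, mutInfo, ent_eq_sum_negMulLog]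
  ring

lemma mutInfo_comp_le (hp0 : ∀ ω, 0 ≤ p ω) {α β α' β' : Type*} [Fintype α] [Fintype β]
    [Fintype α'] [Fintype β'] (X : Ω → α) (Y : Ω → β) (f : α → α') (g : β → β') :
    mutInfo p (fun ω => f (X ω)) (fun ω => g (Y ω)) ≤ mutInfo p X Y := by
  rw [mutInfo_eq_sum_mul_log hp0, mutInfo_eq_sum_mul_log hp0, ← sum_fiberwise univ (Prod.map f g)]
  refine div_le_div_of_nonneg_right (sum_le_sum fun y _ => ?_) (log_nonneg one_le_two)
  have hJ : prob p (fun ω => (f (X ω), g (Y ω))) y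
      = ∑ x with Prod.map f g x = y, prob p (fun ω => (X ω, Y ω)) x := by
    rw [sum_filter]
    exact (prob_comp (Prod.map f g) (fun ω => (X ω, Y ω)) y).trans (by congr!)
  have hPQ : prob p (fun ω => f (X ω)) y.1 * prob p (fun ω => g (Y ω)) y.2
      = ∑ x with Prod.map f g x = y, prob p X x.1 * prob p Y x.2 := by
    rw [prob_comp f X, prob_comp g Y, sum_mul_sum, sum_filter, Fintype.sum_prod_type]
    refine sum_congr rfl fun a _ => sum_congr rfl fun b _ => ?_
    simp only [ite_mul, mul_ite, zero_mul, mul_zero, Prod.map, Prod.ext_iff]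
    split_ifs <;> simp_all
  rw [hJ, hPQ]
  refine sum_mul_log_div_sum_le _ (fun x _ => prob_nonneg hp0 _ x)
    (fun x _ => mul_nonneg (prob_nonneg hp0 X _) (prob_nonneg hp0 Y _)) fun x _ h0 => ?_
  refine le_antisymm ?_ (prob_nonneg hp0 _ x)
  rcases mul_eq_zero.1 h0 with h | h
  · exact h ▸ prob_pair_le_left hp0 X Y x.1 x.2
  · exact h ▸ prob_pair_le_right hp0 X Y x.1 x.2

lemma mutInfo_congr {α β : Type*} [Fintype α] [Fintype β] {X X' : Ω → α} {Y Y' : Ω → β}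
    (h : IdentDist p (fun ω => (X ω, Y ω)) (fun ω => (X' ω, Y' ω))) :
    mutInfo p X Y = mutInfo p X' Y' := by
  rw [mutInfo, mutInfo, ent_congr h, ent_congr (X := X) (Y := X') (h.comp Prod.fst),
    ent_congr (X := Y) (Y := Y') (h.comp Prod.snd)]

end MutualInformation

def Indep {Ω α β : Type*} [Fintype Ω] (p : Ω → ℝ) (X : Ω → α) (Y : Ω → β) : Prop :=
  ∀ a b, prob p (fun ω => (X ω, Y ω)) (a, b) = prob p X a * prob p Y b

section Independence

variable {Ω : Type*} [Fintype Ω] {p : Ω → ℝ}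

lemma indep_of_prob_pair_eq_mul (hp1 : ∑ ω, p ω = 1) {α β : Type*} [Fintype β]
    {X : Ω → α} {Y : Ω → β} (d : α → ℝ)
    (h : ∀ a b, prob p (fun ω => (X ω, Y ω)) (a, b) = d a * prob p Y b) : Indep p X Y := by
  intro a b
  have hX : prob p X a = d a := by
    rw [← sum_prob_pair_right X Y a]
    simp only [h, ← mul_sum, sum_prob hp1, mul_one]
  rw [h, hX]

lemma prob_pair_comp_right {α β γ : Type*} [Fintype α] [Fintype β] (X : Ω → α) (Y : Ω → β)
    (h : β → γ) (a : α) (c : γ) :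
    prob p (fun ω => (X ω, h (Y ω))) (a, c)
      = ∑ b, if h b = c then prob p (fun ω => (X ω, Y ω)) (a, b) else 0 := by
  rw [prob_comp (fun x => (x.1, h x.2)) (fun ω => (X ω, Y ω)), Fintype.sum_prod_type_right]
  simp [Prod.ext_iff, ite_and]

lemma Indep.symm {α β : Type*} {X : Ω → α} {Y : Ω → β} (h : Indep p X Y) : Indep p Y X :=
  fun b a => by
    rw [mul_comm, ← h a b]
    simp only [prob, Prod.mk.injEq, and_comm]

lemma Indep.comp_right {α β γ : Type*} [Fintype α] [Fintype β] {X : Ω → α} {Y : Ω → β}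
    (hXY : Indep p X Y) (h : β → γ) : Indep p X (fun ω => h (Y ω)) := fun a c => by
  rw [prob_pair_comp_right, prob_comp h Y, mul_sum]
  exact sum_congr rfl fun b _ => by split_ifs <;> simp [hXY a b]

lemma Indep.comp_left {α β γ : Type*} [Fintype α] [Fintype β] {X : Ω → α} {Y : Ω → β}
    (hXY : Indep p X Y) (g : α → γ) : Indep p (fun ω => g (X ω)) Y :=
  (hXY.symm.comp_right g).symm

lemma condEnt_eq_sum_of_indep (hp1 : ∑ ω, p ω = 1) {α β γ : Type*} [Fintype α] [Fintype β]
    [Fintype γ] {U : Ω → β} {F : Ω → γ} (hUF : Indep p U F) (T : γ → β → α) :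
    condEnt p (fun ω => T (F ω) (U ω)) F = ∑ f, prob p F f * ent p (fun ω => T f (U ω)) := by
  rw [condEnt, ent_pair_eq_add_sum hp1 _ F (fun f ω => T f (U ω)), add_sub_cancel_left]
  intro x f
  calc prob p (fun ω => (T (F ω) (U ω), F ω)) (x, f)
      = prob p (fun ω => (T f (U ω), F ω)) (x, f) := by
        simp only [prob, Prod.mk.injEq]
        exact sum_congr rfl fun ω _ => by by_cases hf : F ω = f <;> simp [hf]
    _ = prob p F f * prob p (fun ω => T f (U ω)) x := by
        rw [hUF.comp_left (T f) x f, mul_comm]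

lemma condEnt_eq_condEnt_comp_of_indep (hp1 : ∑ ω, p ω = 1) {α β γ δ : Type*} [Fintype α]
    [Fintype β] [Fintype γ] [Fintype δ] {U : Ω → β} {F : Ω → γ} (hUF : Indep p U F)
    (h : γ → δ) (T : δ → β → α) :
    condEnt p (fun ω => T (h (F ω)) (U ω)) F
      = condEnt p (fun ω => T (h (F ω)) (U ω)) (fun ω => h (F ω)) := by
  rw [condEnt_eq_sum_of_indep hp1 hUF (fun f => T (h f)),
    condEnt_eq_sum_of_indep hp1 (hUF.comp_right h) T, sum_prob_comp_mul F h]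

end Independence

theorem spir_joint_answer_entropy_bound_general
    (K N L : ℕ) (hK : 2 ≤ K)
    (Ω : Type*) [Fintype Ω]
    (p : Ω → ℝ) (hp0 : ∀ ω, 0 ≤ p ω) (hp1 : ∑ ω : Ω, p ω = 1)
    (𝓢 𝓕 : Type*) [Fintype 𝓢] [Fintype 𝓕]
    (𝓠 𝓐 : Fin N → Type*) [∀ n, Fintype (𝓠 n)] [∀ n, Fintype (𝓐 n)]
    (W : Fin K → Ω → (Fin L → ZMod 2)) (S : Ω → 𝓢) (F : Ω → 𝓕)
    (Q : ∀ (_ : Fin K) (n : Fin N), Ω → 𝓠 n) (A : ∀ (_ : Fin K) (n : Fin N), Ω → 𝓐 n)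
    -- each message is uniformly distributed on the set of `L`-bit strings
    (hWunif : ∀ k, Unif p (W k))
    -- the messages, the common randomness `S` and the user randomness `F`
    -- are mutually independent
    (hIndep : ∀ (w : ∀ _ : Fin K, Fin L → ZMod 2) (s : 𝓢) (f : 𝓕),
      prob p (fun ω => ((fun k => W k ω), S ω, F ω)) (w, s, f)
        = (∏ k, prob p (W k) (w k)) * prob p S s * prob p F f)
    -- each query is a deterministic function of `F`
    (hQ : ∀ k n, ∃ g : 𝓕 → 𝓠 n, ∀ ω, Q k n ω = g (F ω))
    -- each answer is a deterministic function of the query, the messages and `S`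
    (hA : ∀ k n, ∃ g : 𝓠 n → (∀ _ : Fin K, Fin L → ZMod 2) → 𝓢 → 𝓐 n,
      ∀ ω, A k n ω = g (Q k n ω) (fun j => W j ω) (S ω))
    -- correctness: `W_k` is decodable from the answers and `F`
    (hCorrect : ∀ k, ∃ g : (∀ n, 𝓐 n) → 𝓕 → (Fin L → ZMod 2),
      ∀ ω, W k ω = g (fun n => A k n ω) (F ω))
    -- user-privacy
    (hUserPriv : ∀ (n : Fin N) (k k' : Fin K),
      IdentDist p (fun ω => (Q k n ω, A k n ω, (fun j => W j ω), S ω))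
                  (fun ω => (Q k' n ω, A k' n ω, (fun j => W j ω), S ω)))
    -- database-privacy
    (hDBPriv : ∀ k : Fin K,
      mutInfo p (fun ω => (fun j : {j : Fin K // j ≠ k} => W j.1 ω))
        (fun ω => ((fun n => Q k n ω), (fun n => A k n ω), F ω)) = 0) :
    ∀ (k : Fin K) (n : Fin N),
      (L : ℝ) ≤ condEnt p (fun ω => (fun m => A k m ω)) F - condEnt p (A k n) F := by
  intro k n
  obtain ⟨gQ, hgQ⟩ := hQ k n
  obtain ⟨gA, hgA⟩ := hA k n
  obtain ⟨dec, hdec⟩ := hCorrect k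
  obtain ⟨k', hk'⟩ := Fintype.exists_ne_of_one_lt_card (by rw [Fintype.card_fin]; omega) k
  have hAn : A k n = fun ω => gA (gQ (F ω)) (fun j => W j ω) (S ω) :=
    funext fun ω => by rw [hgA, hgQ]
  have hUF : Indep p (fun ω => ((fun j => W j ω), S ω)) F :=
    indep_of_prob_pair_eq_mul hp1 (fun u => (∏ j, prob p (W j) (u.1 j)) * prob p S u.2)
      fun ⟨w, s⟩ f => by rw [← hIndep]; simp only [prob, Prod.mk.injEq, and_assoc]
  have hPair : condEnt p (fun ω => (W k ω, A k n ω)) F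
      = condEnt p (fun ω => (W k ω, A k n ω)) (fun ω => gQ (F ω)) := by
    simpa only [hAn] using condEnt_eq_condEnt_comp_of_indep hp1 hUF gQ
      fun q u => (u.1 k, gA q u.1 u.2)
  have hSingle : condEnt p (A k n) F = condEnt p (A k n) (fun ω => gQ (F ω)) := by
    simpa only [hAn] using condEnt_eq_condEnt_comp_of_indep hp1 hUF gQ
      fun q u => gA q u.1 u.2
  have hDecode : condEnt p (fun ω => (W k ω, A k n ω)) F
      ≤ condEnt p (fun ω => fun m => A k m ω) F := by
    simpa only [← hdec] using condEnt_comp_le hp0 (fun ω m => A k m ω) F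
      fun a f => (dec a f, a n)
  have hLeak : mutInfo p (W k) (fun ω => (A k n ω, gQ (F ω))) ≤ 0 := by
    simp only [← hgQ]
    have hSwap : mutInfo p (W k) (fun ω => (A k n ω, Q k n ω))
        = mutInfo p (W k) (fun ω => (A k' n ω, Q k' n ω)) :=
      mutInfo_congr ((hUserPriv n k k').comp fun t => (t.2.2.1 k, t.2.1, t.1))
    rw [hSwap, ← hDBPriv k']
    exact mutInfo_comp_le hp0 (fun ω (j : {j : Fin K // j ≠ k'}) => W j.1 ω)
      (fun ω => ((fun m => Q k' m ω), (fun m => A k' m ω), F ω))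
      (fun w => w ⟨k, hk'.symm⟩) fun t => (t.2.1 n, t.1 n)
  have hWk : ent p (W k) = L := by
    simp [ent_of_unif (hWunif k), logb_pow]
  have hChain := condEnt_pair_sub_condEnt (p := p) (W k) (A k n) fun ω => gQ (F ω)
  linarith

/-- In any zero-error SPIR scheme, for every message index `k` and every
database index `n`, `L ≤ H(A_1^[k], …, A_N^[k] | F) − H(A_n^[k] | F)`. -/
theorem spir_joint_answer_entropy_bound
    (K N L : ℕ) (hK : 2 ≤ K) (hN : 2 ≤ N) (hL : 1 ≤ L)
    (Ω : Type*) [Fintype Ω]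
    (p : Ω → ℝ) (hp0 : ∀ ω, 0 ≤ p ω) (hp1 : ∑ ω : Ω, p ω = 1)
    (𝓢 𝓕 : Type*) [Fintype 𝓢] [Fintype 𝓕]
    (𝓠 𝓐 : Fin N → Type*) [∀ n, Fintype (𝓠 n)] [∀ n, Fintype (𝓐 n)]
    (W : Fin K → Ω → (Fin L → ZMod 2)) (S : Ω → 𝓢) (F : Ω → 𝓕)
    (Q : ∀ (_ : Fin K) (n : Fin N), Ω → 𝓠 n) (A : ∀ (_ : Fin K) (n : Fin N), Ω → 𝓐 n)
    -- each message is uniformly distributed on the set of `L`-bit strings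
    (hWunif : ∀ k, Unif p (W k))
    -- the messages, the common randomness `S` and the user randomness `F`
    -- are mutually independent
    (hIndep : ∀ (w : ∀ _ : Fin K, Fin L → ZMod 2) (s : 𝓢) (f : 𝓕),
      prob p (fun ω => ((fun k => W k ω), S ω, F ω)) (w, s, f)
        = (∏ k, prob p (W k) (w k)) * prob p S s * prob p F f)
    -- each query is a deterministic function of `F`
    (hQ : ∀ k n, ∃ g : 𝓕 → 𝓠 n, ∀ ω, Q k n ω = g (F ω))
    -- each answer is a deterministic function of the query, the messages and `S`
    (hA : ∀ k n, ∃ g : 𝓠 n → (∀ _ : Fin K, Fin L → ZMod 2) → 𝓢 → 𝓐 n,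
      ∀ ω, A k n ω = g (Q k n ω) (fun j => W j ω) (S ω))
    -- correctness: `W_k` is decodable from the answers and `F`
    (hCorrect : ∀ k, ∃ g : (∀ n, 𝓐 n) → 𝓕 → (Fin L → ZMod 2),
      ∀ ω, W k ω = g (fun n => A k n ω) (F ω))
    -- user-privacy
    (hUserPriv : ∀ (n : Fin N) (k k' : Fin K),
      IdentDist p (fun ω => (Q k n ω, A k n ω, (fun j => W j ω), S ω))
                  (fun ω => (Q k' n ω, A k' n ω, (fun j => W j ω), S ω)))
    -- database-privacy
    (hDBPriv : ∀ k : Fin K,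
      mutInfo p (fun ω => (fun j : {j : Fin K // j ≠ k} => W j.1 ω))
        (fun ω => ((fun n => Q k n ω), (fun n => A k n ω), F ω)) = 0) :
    ∀ (k : Fin K) (n : Fin N),
      (L : ℝ) ≤ condEnt p (fun ω => (fun m => A k m ω)) F - condEnt p (A k n) F :=
  spir_joint_answer_entropy_bound_general K N L hK Ω p hp0 hp1 𝓢 𝓕 𝓠 𝓐 W S F Q A hWunif hIndep hQ hA
    hCorrect hUserPriv hDBPriv
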